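/- arXiv:1507.07233 — 9 statements merged into one kernel-verified Lean document; each statement's English description precedes it below -/
import Mathlib

section
/- Let A be a commutative noetherian ring and M a finitely generated A-module. For each associated prime p of M let T_p(M) = {m ∈ M | s•m = 0 for some s ∈ A \ p}, a submodule of M, and set Q_p = M / T_p(M). Then ann(M) equals the intersection, over all associated primes p of M, of the annihilators ann(Q_p). -/
/-- For a prime ideal `p`, the submodule `T_p(M) = {m ∈ M | s • m = 0 for some s ∉ p}`,
the kernel of the localization map `M → M_p`. -/
def relTorsion {A : Type*} [CommRing A] (M : Type*) [AddCommGroup M] [Module A M]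
    (p : Ideal A) (hp : p.IsPrime) : Submodule A M where
  carrier := {m | ∃ s ∉ p, s • m = 0}
  zero_mem' := ⟨1, fun h => hp.ne_top (Ideal.eq_top_of_isUnit_mem p h isUnit_one), smul_zero 1⟩
  add_mem' := by
    rintro x y ⟨s, hs, hsx⟩ ⟨t, ht, hty⟩
    refine ⟨s * t, fun h => ((hp.mem_or_mem h).elim hs ht), ?_⟩
    have h1 : (s * t) • x = 0 := by rw [mul_comm, mul_smul, hsx, smul_zero]
    have h2 : (s * t) • y = 0 := by rw [mul_smul, hty, smul_zero]
    rw [smul_add, h1, h2, add_zero]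
  smul_mem' := by
    rintro a x ⟨s, hs, hsx⟩
    exact ⟨s, hs, by rw [smul_comm, hsx, smul_zero]⟩

/-! The intersection of the `T_p(M)` over `p ∈ ass(M)` is zero: a nonzero `x` has an associated
prime `p ⊇ ann(x)`, and then no `s ∉ p` kills `x`. Since `M` embeds into `∏ M / T_p(M)`,
its annihilator is the intersection of the annihilators of these quotients. -/

theorem Module.annihilator_eq_iInf_annihilator_quotient {A M ι : Type*} [Ring A]
    [AddCommGroup M] [Module A M] (N : ι → Submodule A M) (hN : ⨅ i, N i = ⊥) :
    Module.annihilator A M = ⨅ i, Module.annihilator A (M ⧸ N i) := by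
  simp_rw [Submodule.annihilator_quotient]
  rw [← Submodule.iInf_colon, hN, ← Submodule.top_coe (R := A), Submodule.bot_colon,
    Submodule.annihilator_top]

section relTorsion

variable {A M : Type*} [CommRing A] [AddCommGroup M] [Module A M]

theorem mem_relTorsion_iff_not_colon_le {p : Ideal A} (hp : p.IsPrime) {x : M} :
    x ∈ relTorsion M p hp ↔ ¬(⊥ : Submodule A M).colon {x} ≤ p := by
  simp only [SetLike.not_le_iff_exists, Submodule.mem_colon_singleton, Submodule.mem_bot]
  exact ⟨fun ⟨s, hs, hsx⟩ => ⟨s, hsx, hs⟩, fun ⟨s, hsx, hs⟩ => ⟨s, hs, hsx⟩⟩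

theorem iInf_relTorsion_associatedPrimes_eq_bot [IsNoetherianRing A] :
    ⨅ p : associatedPrimes A M, relTorsion M (p : Ideal A) p.2.isPrime = ⊥ := by
  refine eq_bot_iff.mpr fun x hx => (Submodule.mem_bot A).mpr ?_
  by_contra hx0
  obtain ⟨p, hp, hle⟩ := exists_le_isAssociatedPrime_of_isNoetherianRing A x hx0
  exact (mem_relTorsion_iff_not_colon_le hp.isPrime).mp
    (Submodule.mem_iInf _ |>.mp hx ⟨p, hp⟩) hle

end relTorsion

theorem annihilator_eq_iInf_annihilator_quotient_relTorsion_general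
    {A : Type*} [CommRing A] [IsNoetherianRing A]
    {M : Type*} [AddCommGroup M] [Module A M] :
    Module.annihilator A M =
      ⨅ p : associatedPrimes A M,
        Module.annihilator A (M ⧸ relTorsion M (p : Ideal A) p.2.isPrime) :=
  Module.annihilator_eq_iInf_annihilator_quotient _ iInf_relTorsion_associatedPrimes_eq_bot

/-- Over a commutative noetherian ring, the annihilator of a finitely generated module `M`
is the intersection, over the associated primes `p` of `M`, of the annihilators of the
quotients `Q_p = M / T_p(M)`. -/
theorem annihilator_eq_iInf_annihilator_quotient_relTorsion
    {A : Type*} [CommRing A] [IsNoetherianRing A]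
    {M : Type*} [AddCommGroup M] [Module A M] [Module.Finite A M] :
    Module.annihilator A M =
      ⨅ p : associatedPrimes A M,
        Module.annihilator A (M ⧸ relTorsion M (p : Ideal A) p.2.isPrime) :=
  annihilator_eq_iInf_annihilator_quotient_relTorsion_general
end

section
/- (Existence of a primary summation) Let A be a commutative noetherian ring and M a nonzero finitely generated A-module. Then there exist finitely many submodules N₁, ..., N_t of M with N₁ ∩ ... ∩ N_t = 0 such that each quotient M/N_i is a primary module; consequently the canonical map M → (M/N₁) ⊕ ... ⊕ (M/N_t) is injective and each projection M → M/N_i is surjective, i.e. M is nicely embedded into a direct sum of primary modules. -/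
/-- An `A`-module `Q` is primary if every zero divisor of `Q` lies in the radical of
the annihilator of `Q`. -/
def IsPrimaryModule (A : Type*) [CommRing A] (Q : Type*) [AddCommGroup Q] [Module A Q] : Prop :=
  ∀ (a : A) (x : Q), a • x = 0 → x ≠ 0 → a ∈ (Module.annihilator A Q).radical

/-- An inf-irreducible submodule of a Noetherian module gives a primary quotient. -/
lemma InfIrred.smul_mem_or_exists_pow_smul_le
    {A : Type*} [CommRing A] {M : Type*} [AddCommGroup M] [Module A M] [IsNoetherian A M]
    {N : Submodule A M} (h : InfIrred N) {a : A} {x : M} (hax : a • x ∈ N) :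
    x ∈ N ∨ ∃ n : ℕ, ∀ y : M, a ^ n • y ∈ N := by
  let f : ℕ → Submodule A M := fun n => N.comap (a ^ n • (LinearMap.id : M →ₗ[A] M))
  have hfmem : ∀ n y, y ∈ f n ↔ a ^ n • y ∈ N := fun n y => Iff.rfl
  have hf : Monotone f := by
    intro n m hnm y hy
    rw [hfmem] at hy ⊢
    rw [show a ^ m = a ^ (m - n) * a ^ n by rw [← pow_add]; congr 1; omega, mul_smul]
    exact N.smul_mem _ hy
  obtain ⟨n, hn⟩ := monotone_stabilizes_iff_noetherian.mpr ‹_› ⟨f, hf⟩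
  rcases h with ⟨-, h⟩
  specialize @h (f n) (N ⊔ LinearMap.range (a ^ n • (LinearMap.id : M →ₗ[A] M))) ?_
  · refine le_antisymm (fun y hy => ?_) (le_inf (fun y hy => ?_) le_sup_left)
    · obtain ⟨hy1, hy2⟩ := Submodule.mem_inf.mp hy
      rw [hfmem] at hy1
      obtain ⟨m, hm, z, hz, rfl⟩ := Submodule.mem_sup.mp hy2
      obtain ⟨w, rfl⟩ := LinearMap.mem_range.mp hz
      simp only [LinearMap.smul_apply, LinearMap.id_coe, id_eq] at *
      rw [smul_add, smul_smul, ← pow_add] at hy1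
      have hw : w ∈ f (n + n) := by
        rw [hfmem]
        have := N.add_mem hy1 (N.neg_mem (N.smul_mem (a ^ n) hm))
        simpa using this
      have hstab := hn (n + n) (by omega)
      simp only [OrderHom.coe_mk] at hstab
      rw [← hstab] at hw
      rw [hfmem] at hw
      exact N.add_mem hm hw
    · rw [hfmem]; exact N.smul_mem _ hy
  rcases h with h | h
  · left
    have hx1 : x ∈ f 1 := by rw [hfmem]; simpa using hax
    rcases Nat.eq_zero_or_pos n with rfl | hn'
    · have h1 := hn 1 (by omega)
      simp only [OrderHom.coe_mk] at h1
      rw [← h1, h] at hx1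
      exact hx1
    · rw [← h]
      exact hf hn' hx1
  · right
    refine ⟨n, fun y => ?_⟩
    rw [← h]
    exact Submodule.mem_sup_right (LinearMap.mem_range.mpr ⟨y, rfl⟩)

/-- (Existence of a primary summation) Over a commutative noetherian ring, any nonzero
finitely generated module `M` admits finitely many submodules `N₁, …, N_t` with
`N₁ ∩ … ∩ N_t = 0` and each `M ⧸ Nᵢ` primary; hence `M` is nicely embedded into the
direct sum of the primary modules `M ⧸ Nᵢ`: the canonical map is injective and each
projection is surjective. -/
theorem exists_nice_embedding_into_primary_modules
    {A : Type*} [CommRing A] [IsNoetherianRing A]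
    {M : Type*} [AddCommGroup M] [Module A M] [Module.Finite A M] [Nontrivial M] :
    ∃ (t : ℕ) (N : Fin t → Submodule A M),
      (⨅ i, N i) = ⊥ ∧
      (∀ i, IsPrimaryModule A (M ⧸ N i)) ∧
      Function.Injective (fun m : M => fun i : Fin t => (N i).mkQ m) ∧
      (∀ i, Function.Surjective ((N i).mkQ : M → M ⧸ N i)) := by
  classical
  have hNoeth : IsNoetherian A M := isNoetherian_of_isNoetherianRing_of_finite A M
  have : WellFoundedGT (Submodule A M) := hNoeth.wellFoundedGT
  obtain ⟨s, hs, hirr⟩ := exists_infIrred_decomposition (⊥ : Submodule A M)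
  refine ⟨s.card, fun i => (s.equivFin.symm i : Submodule A M), ?_, ?_, ?_, ?_⟩
  · rw [← hs, Finset.inf_eq_iInf, iInf_subtype']
    exact s.equivFin.symm.iInf_comp (g := fun x : {a // a ∈ s} => id (x : Submodule A M))
  · intro i a x hax hx
    set N : Submodule A M := (s.equivFin.symm i : Submodule A M)
    obtain ⟨y, rfl⟩ := N.mkQ_surjective x
    rw [← map_smul, Submodule.mkQ_apply, Submodule.Quotient.mk_eq_zero] at hax
    have hy : y ∉ N := fun hy => hx (by simpa [Submodule.Quotient.mk_eq_zero] using hy)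
    have := InfIrred.smul_mem_or_exists_pow_smul_le (hirr (s.equivFin.symm i).2) hax
    rcases this with h | ⟨n, hn⟩
    · exact absurd h hy
    · exact Ideal.mem_radical_iff.mpr ⟨n, Module.mem_annihilator.mpr fun q => by
        obtain ⟨z, rfl⟩ := N.mkQ_surjective q
        rw [← map_smul, Submodule.mkQ_apply, Submodule.Quotient.mk_eq_zero]
        exact hn z⟩
  · intro m1 m2 hm
    have : ∀ i, (s.equivFin.symm i : Submodule A M).mkQ m1
        = (s.equivFin.symm i : Submodule A M).mkQ m2 := fun i => congrFun hm i
    have hsub : m1 - m2 ∈ (⊥ : Submodule A M) := by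
      rw [← hs, Finset.inf_eq_iInf]
      refine Submodule.mem_iInf _ |>.mpr fun N => Submodule.mem_iInf _ |>.mpr fun hN => ?_
      have h2 := this (s.equivFin ⟨N, hN⟩)
      rw [Equiv.symm_apply_apply] at h2
      simp only [Submodule.mkQ_apply] at h2
      exact (Submodule.Quotient.eq _).mp h2
    simpa [sub_eq_zero] using hsub
  · exact fun i => Submodule.mkQ_surjective _
end

section
/- (First uniqueness theorem) Let A be a commutative noetherian ring and M a finitely generated A-module. Suppose N₁, ..., N_t are submodules of M with N₁ ∩ ... ∩ N_t = 0, each quotient M/N_i is primary with set of associated primes equal to the singleton {p_i}, the primes p₁, ..., p_t are pairwise distinct, and the decomposition is irredundant (for each i, the intersection of the N_j for j ≠ i is not contained in N_i, i.e. is nonzero when intersected suitably: ∩_{j≠i} N_j ≠ 0). Then the set of associated primes of M equals {p₁, ..., p_t}. -/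
/-!
An associated prime of `M` is the radical of the annihilator of some `x`, which is the finite
intersection of the radicals of the annihilators of the images of `x` in the `M ⧸ Nᵢ`; being
prime it equals one of them, so it is associated to some `M ⧸ Nᵢ`.
Conversely `L = ⋂_{j ≠ i} Nⱼ` is nonzero and meets `Nᵢ` trivially, so `L` embeds both into `M`
and into `M ⧸ Nᵢ`, and any associated prime of `L` is associated to both, hence equal to `pᵢ`.
-/

open Submodule

namespace associatedPrimes

theorem pi_subset {R : Type*} [CommSemiring R] {ι : Type*} [Finite ι] {M : ι → Type*}
    [∀ i, AddCommMonoid (M i)] [∀ i, Module R (M i)] :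
    associatedPrimes R (Π i, M i) ⊆ ⋃ i, associatedPrimes R (M i) := by
  have := Fintype.ofFinite ι
  rintro P ⟨hP, x, rfl⟩
  have hcolon : colon ⊥ {x} = ⨅ i, colon (⊥ : Submodule R (M i)) {x i} := by
    ext r
    simp only [mem_iInf, mem_colon_singleton, mem_bot, funext_iff, Pi.smul_apply,
      Pi.zero_apply]
  have hle : Finset.univ.inf (fun i ↦ colon (⊥ : Submodule R (M i)) {x i}) ≤
      (colon ⊥ {x}).radical := by
    simpa only [Finset.inf_eq_iInf, Finset.mem_univ, iInf_true, ← hcolon] using Ideal.le_radical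
  obtain ⟨i, -, hi⟩ := hP.inf_le'.mp hle
  refine Set.mem_iUnion.mpr ⟨i, hP, x i, le_antisymm ?_ (hP.radical_le_iff.mpr hi)⟩
  exact hcolon ▸ Ideal.radical_mono (iInf_le _ i)

theorem subset_iUnion_quotient {R M : Type*} [CommRing R] [AddCommGroup M] [Module R M]
    {ι : Type*} [Finite ι] (N : ι → Submodule R M) (hN : ⨅ i, N i = ⊥) :
    associatedPrimes R M ⊆ ⋃ i, associatedPrimes R (M ⧸ N i) := by
  have hinj : Function.Injective (LinearMap.pi fun i ↦ (N i).mkQ) := by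
    simp only [← LinearMap.ker_eq_bot, LinearMap.ker_pi, ker_mkQ, hN]
  exact (subset_of_injective hinj).trans pi_subset

theorem inter_quotient_nonempty_of_disjoint {R M : Type*} [CommRing R] [IsNoetherianRing R]
    [AddCommGroup M] [Module R M] {L N : Submodule R M} (hLN : Disjoint L N) (hL : L ≠ ⊥) :
    (associatedPrimes R M ∩ associatedPrimes R (M ⧸ N)).Nonempty := by
  have : Nontrivial L := nontrivial_iff_ne_bot.mpr hL
  obtain ⟨P, hP⟩ := associatedPrimes.nonempty R L
  have hinj : Function.Injective (N.mkQ ∘ₗ L.subtype) := by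
    rwa [← LinearMap.ker_eq_bot, LinearMap.ker_comp, ker_mkQ, ← disjoint_iff_comap_eq_bot]
  exact ⟨P, hP.map_of_injective _ L.injective_subtype, hP.map_of_injective _ hinj⟩

end associatedPrimes

theorem associatedPrimes_eq_of_primary_decomposition_general
    {A : Type*} [CommRing A] [IsNoetherianRing A]
    {M : Type*} [AddCommGroup M] [Module A M]
    (t : ℕ) (N : Fin t → Submodule A M) (p : Fin t → Ideal A)
    (hinf : (⨅ i, N i) = ⊥)
    (hass : ∀ i, associatedPrimes A (M ⧸ N i) = {p i})
    (hirred : ∀ i, (⨅ j ∈ ({i}ᶜ : Set (Fin t)), N j) ≠ ⊥) :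
    associatedPrimes A M = Set.range p := by
  apply subset_antisymm
  · intro P hP
    obtain ⟨i, hi⟩ := Set.mem_iUnion.mp (associatedPrimes.subset_iUnion_quotient N hinf hP)
    rw [hass i] at hi
    exact ⟨i, hi.symm⟩
  · rintro _ ⟨i, rfl⟩
    have hdisj : Disjoint (⨅ j ∈ ({i}ᶜ : Set (Fin t)), N j) (N i) := by
      rw [disjoint_iff, inf_comm, ← hinf, iInf_split_single N i]
      rfl
    obtain ⟨P, hPM, hPi⟩ := associatedPrimes.inter_quotient_nonempty_of_disjoint hdisj (hirred i)
    rw [hass i, Set.mem_singleton_iff] at hPi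
    exact hPi ▸ hPM

/-- (First uniqueness theorem) Over a commutative noetherian ring, if
`N₁ ∩ … ∩ N_t = 0` is an irredundant decomposition of `0` in a finitely generated
module `M`, where each `M ⧸ Nᵢ` is primary with single associated prime `pᵢ` and the
`pᵢ` are pairwise distinct, then `ass(M) = {p₁, …, p_t}`. -/
theorem associatedPrimes_eq_of_primary_decomposition
    {A : Type*} [CommRing A] [IsNoetherianRing A]
    {M : Type*} [AddCommGroup M] [Module A M] [Module.Finite A M]
    (t : ℕ) (N : Fin t → Submodule A M) (p : Fin t → Ideal A)
    (hinf : (⨅ i, N i) = ⊥)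
    (hprim : ∀ i, IsPrimaryModule A (M ⧸ N i))
    (hass : ∀ i, associatedPrimes A (M ⧸ N i) = {p i})
    (hdist : Function.Injective p)
    (hirred : ∀ i, (⨅ j ∈ ({i}ᶜ : Set (Fin t)), N j) ≠ ⊥) :
    associatedPrimes A M = Set.range p :=
  associatedPrimes_eq_of_primary_decomposition_general t N p hinf hass hirred
end

section
/- (Second uniqueness theorem) Let A be a commutative noetherian ring and M a finitely generated A-module. Suppose N₁, ..., N_t are submodules of M with N₁ ∩ ... ∩ N_t = 0, each quotient M/N_i is primary with set of associated primes equal to the singleton {p_i}, and the primes p₁, ..., p_t are pairwise distinct. If p_j is a minimal element of the set of associated primes of M (no associated prime of M is strictly contained in p_j), then N_j = {m ∈ M | s•m = 0 for some s ∈ A \ p_j}, i.e. N_j is the kernel of the localization map M → M_{p_j} and is therefore uniquely determined by M. -/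
section

variable {A : Type*} [CommRing A] {M : Type*} [AddCommGroup M] [Module A M]

namespace IsPrimaryModule

theorem radical_annihilator_eq_of_mem_associatedPrimes {Q : Type*} [AddCommGroup Q] [Module A Q]
    (hQ : IsPrimaryModule A Q) {p : Ideal A} (hp : p ∈ associatedPrimes A Q) :
    (Module.annihilator A Q).radical = p := by
  obtain ⟨hprime, x, rfl⟩ := hp
  have hx : x ≠ 0 := by
    rintro rfl
    exact hprime.ne_top (by simp)
  refine le_antisymm ?_ fun a ⟨n, hn⟩ => ?_
  · rw [hprime.radical_le_iff, ← Submodule.annihilator_top]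
    exact IsAssociatedPrime.annihilator_le ⟨hprime, x, rfl⟩
  · rw [Submodule.mem_colon_singleton, Submodule.mem_bot] at hn
    obtain ⟨k, hk⟩ := hQ _ x hn hx
    exact ⟨n * k, by rwa [pow_mul]⟩

theorem mem_of_smul_mem {N : Submodule A M} (hN : IsPrimaryModule A (M ⧸ N)) {s : A}
    (hs : s ∉ (Module.annihilator A (M ⧸ N)).radical) {m : M} (hsm : s • m ∈ N) : m ∈ N := by
  by_contra hm
  refine hs (hN s (Submodule.Quotient.mk m) ?_ ?_)
  · rwa [← Submodule.Quotient.mk_smul, Submodule.Quotient.mk_eq_zero]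
  · rwa [Ne, Submodule.Quotient.mk_eq_zero]

end IsPrimaryModule

theorem exists_pow_smul_mem_of_mem_radical_annihilator {N : Submodule A M} {s : A}
    (hs : s ∈ (Module.annihilator A (M ⧸ N)).radical) (m : M) : ∃ n : ℕ, s ^ n • m ∈ N := by
  obtain ⟨n, hn⟩ := hs
  refine ⟨n, ?_⟩
  rw [← Submodule.Quotient.mk_eq_zero, Submodule.Quotient.mk_smul]
  exact Module.mem_annihilator.mp hn _

theorem Ideal.IsPrime.exists_notMem_smul_mem_iInf {ι : Type*} [Fintype ι] {P : Ideal A}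
    [P.IsPrime] {N : ι → Submodule A M} {m : M} (h : ∀ i, ∃ s ∉ P, s • m ∈ N i) :
    ∃ s ∉ P, s • m ∈ ⨅ i, N i := by
  classical
  choose s hsP hsm using h
  refine ⟨∏ i, s i, fun hmem => ?_, Submodule.mem_iInf _ |>.mpr fun i => ?_⟩
  · obtain ⟨i, -, hi⟩ := Ideal.IsPrime.prod_mem_iff.mp hmem
    exact hsP i hi
  · rw [← Finset.prod_erase_mul _ _ (Finset.mem_univ i), mul_smul]
    exact (N i).smul_mem _ (hsm i)

section Noetherian

variable [IsNoetherianRing A] [Module.Finite A M]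

theorem exists_mem_associatedPrimes_le_of_annihilator_le {q : Ideal A} [q.IsPrime]
    (h : Module.annihilator A M ≤ q) : ∃ P ∈ associatedPrimes A M, P ≤ q :=
  let ⟨P, hP, hPq⟩ := Ideal.exists_minimalPrimes_le h
  ⟨P, Module.associatedPrimes.minimalPrimes_annihilator_subset_associatedPrimes A M hP, hPq⟩

theorem exists_mem_associatedPrimes_le_of_mem_associatedPrimes_quotient {N : Submodule A M}
    {p : Ideal A} (hp : p ∈ associatedPrimes A (M ⧸ N)) : ∃ P ∈ associatedPrimes A M, P ≤ p := by
  have := hp.isPrime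
  apply exists_mem_associatedPrimes_le_of_annihilator_le
  calc Module.annihilator A M ≤ Module.annihilator A (M ⧸ N) :=
        N.mkQ.annihilator_le_of_surjective N.mkQ_surjective
    _ ≤ p := Submodule.annihilator_top (R := A) (M := M ⧸ N) ▸ hp.annihilator_le

theorem eq_of_le_of_mem_associatedPrimes_quotient {N : Submodule A M} {p q : Ideal A}
    (hp : p ∈ associatedPrimes A (M ⧸ N)) (hq : ∀ P ∈ associatedPrimes A M, ¬ P < q)
    (hpq : p ≤ q) : p = q := by
  obtain ⟨P, hP, hPp⟩ := exists_mem_associatedPrimes_le_of_mem_associatedPrimes_quotient hp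
  have hPq : P = q := (hPp.trans hpq).eq_of_not_lt (hq P hP)
  exact le_antisymm hpq (hPq ▸ hPp)

end Noetherian

end

theorem primary_component_of_minimal_prime_eq_localization_kernel_general
    {A : Type*} [CommRing A] [IsNoetherianRing A]
    {M : Type*} [AddCommGroup M] [Module A M] [Module.Finite A M]
    (t : ℕ) (N : Fin t → Submodule A M) (p : Fin t → Ideal A)
    (hinf : (⨅ i, N i) = ⊥)
    (hprim : ∀ i, IsPrimaryModule A (M ⧸ N i))
    (hass : ∀ i, associatedPrimes A (M ⧸ N i) = {p i})
    (hdist : Function.Injective p)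
    (j : Fin t)
    (hmin : ∀ q ∈ associatedPrimes A M, ¬ q < p j) :
    ∀ m : M, m ∈ N j ↔ ∃ s ∉ p j, s • m = 0 := by
  have hpmem i : p i ∈ associatedPrimes A (M ⧸ N i) := by simp [hass i]
  have hrad i : (Module.annihilator A (M ⧸ N i)).radical = p i :=
    (hprim i).radical_annihilator_eq_of_mem_associatedPrimes (hpmem i)
  have hprime : (p j).IsPrime := (hpmem j).isPrime
  intro m
  refine ⟨fun hm => ?_, fun ⟨s, hs, hsm⟩ => (hprim j).mem_of_smul_mem (hrad j ▸ hs) (by simp [hsm])⟩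
  have hlocal i : ∃ s ∉ p j, s • m ∈ N i := by
    rcases eq_or_ne i j with rfl | hij
    · exact ⟨1, hprime.one_notMem, by simpa using hm⟩
    have hnle : ¬ p i ≤ p j := fun hle =>
      hij (hdist (eq_of_le_of_mem_associatedPrimes_quotient (hpmem i) hmin hle))
    obtain ⟨s, hsi, hsj⟩ := SetLike.not_le_iff_exists.mp hnle
    obtain ⟨n, hn⟩ := exists_pow_smul_mem_of_mem_radical_annihilator (hrad i ▸ hsi) m
    exact ⟨s ^ n, fun h => hsj (hprime.mem_of_pow_mem n h), hn⟩
  obtain ⟨s, hs, hsm⟩ := Ideal.IsPrime.exists_notMem_smul_mem_iInf hlocal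
  exact ⟨s, hs, by rwa [hinf, Submodule.mem_bot] at hsm⟩

/-- (Second uniqueness theorem) Over a commutative noetherian ring, if
`N₁ ∩ … ∩ N_t = 0` in a finitely generated module `M`, where each `M ⧸ Nᵢ` is primary
with single associated prime `pᵢ` and the `pᵢ` are pairwise distinct, and if `p_j` is a
minimal element of `ass(M)`, then `N_j` is the kernel of the localization map
`M → M_{p_j}`, i.e. `N_j = {m ∈ M | s • m = 0 for some s ∉ p_j}`; in particular `N_j`
is uniquely determined by `M`. -/
theorem primary_component_of_minimal_prime_eq_localization_kernel
    {A : Type*} [CommRing A] [IsNoetherianRing A]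
    {M : Type*} [AddCommGroup M] [Module A M] [Module.Finite A M]
    (t : ℕ) (N : Fin t → Submodule A M) (p : Fin t → Ideal A)
    (hinf : (⨅ i, N i) = ⊥)
    (hprim : ∀ i, IsPrimaryModule A (M ⧸ N i))
    (hass : ∀ i, associatedPrimes A (M ⧸ N i) = {p i})
    (hdist : Function.Injective p)
    (j : Fin t) (hmem : p j ∈ associatedPrimes A M)
    (hmin : ∀ q ∈ associatedPrimes A M, ¬ q < p j) :
    ∀ m : M, m ∈ N j ↔ ∃ s ∉ p j, s • m = 0 :=
  primary_component_of_minimal_prime_eq_localization_kernel_general t N p hinf hprim hass hdist j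
    hmin
end

section
/- Let A be a commutative ring, M an A-module, and d an element of the extended ordered set of Krull dimensions (WithBot ℕ∞). Then the set t = {m ∈ M | the Krull dimension of the quotient ring A / ann(A•m) is ≤ d}, where A•m denotes the cyclic submodule of M generated by m and ann(A•m) its annihilator ideal, is a submodule of M. Consequently, for a module over a polynomial ring in n variables, the sets t_r(M) = {m ∈ M | codimension of the cyclic submodule generated by m is > r} form a nested chain of submodules 0 = t_n(M) ⊆ t_{n-1}(M) ⊆ ... ⊆ t_0(M) ⊆ M. -/
/-!
The dimension of the cyclic module `A • m` is that of `V(ann(A • m))` in `Spec A`. Since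
`ann(A • (x + y)) ⊇ ann(A • x) ⊓ ann(A • y)` and `V(I ⊓ J) = V(I) ∪ V(J)`, the dimension of
`A • (x + y)` is at most the larger of the dimensions of `A • x` and `A • y`; a chain of primes
in the union of two upward closed sets lies entirely in the one containing its smallest member.
Together with `ann(A • (a • x)) ⊇ ann(A • x)` and `dim (A • 0) = ⊥`, this makes every lower set
of dimensions containing `⊥` cut out a submodule.
-/

open Order

theorem Order.krullDim_union_le_max {α : Type*} [Preorder α] {s t : Set α}
    (hs : IsUpperSet s) (ht : IsUpperSet t) :
    krullDim ↥(s ∪ t) ≤ max (krullDim s) (krullDim t) := by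
  have length_le {u : Set α} (hu : IsUpperSet u) (p : LTSeries ↥(s ∪ t)) (h : p.head.1 ∈ u) :
      (p.length : WithBot ℕ∞) ≤ krullDim u :=
    LTSeries.length_le_krullDim
      ⟨p.length, fun i => ⟨p i, hu (p.head_le i) h⟩, fun i => p.step i⟩
  refine iSup_le fun p => ?_
  rcases p.head.2 with h | h
  · exact (length_le hs p h).trans (le_max_left _ _)
  · exact (length_le ht p h).trans (le_max_right _ _)

theorem PrimeSpectrum.isUpperSet_zeroLocus {R : Type*} [CommSemiring R] (s : Set R) :
    IsUpperSet (PrimeSpectrum.zeroLocus s) :=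
  fun _ _ hpq hp => Set.Subset.trans hp hpq

theorem ringKrullDim_quotient_inf_le {R : Type*} [CommRing R] (I J : Ideal R) :
    ringKrullDim (R ⧸ (I ⊓ J)) ≤ max (ringKrullDim (R ⧸ I)) (ringKrullDim (R ⧸ J)) := by
  rw [ringKrullDim_quotient, ringKrullDim_quotient, ringKrullDim_quotient,
    PrimeSpectrum.zeroLocus_inf]
  exact krullDim_union_le_max (PrimeSpectrum.isUpperSet_zeroLocus _)
    (PrimeSpectrum.isUpperSet_zeroLocus _)

theorem ringKrullDim_quotient_antitone {R : Type*} [CommRing R] {I J : Ideal R} (h : I ≤ J) :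
    ringKrullDim (R ⧸ J) ≤ ringKrullDim (R ⧸ I) :=
  ringKrullDim_le_of_surjective (Ideal.Quotient.factor h) (Ideal.Quotient.factor_surjective h)

theorem ringKrullDim_quotient_eq_bot_iff {R : Type*} [CommRing R] (I : Ideal R) :
    ringKrullDim (R ⧸ I) = ⊥ ↔ I = ⊤ := by
  rw [ringKrullDim_quotient, krullDim_eq_bot_iff, Set.isEmpty_coe_sort,
    PrimeSpectrum.zeroLocus_empty_iff_eq_top]

section CyclicDim

variable (A : Type*) [CommRing A] {M : Type*} [AddCommGroup M] [Module A M]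

/-- The Krull dimension of the cyclic submodule `A • m`. -/
noncomputable def cyclicKrullDim (m : M) : WithBot ℕ∞ :=
  ringKrullDim (A ⧸ (Submodule.span A {m}).annihilator)

variable {A}

theorem cyclicKrullDim_eq_bot_iff {m : M} : cyclicKrullDim A m = ⊥ ↔ m = 0 := by
  rw [cyclicKrullDim, ringKrullDim_quotient_eq_bot_iff, Submodule.annihilator_eq_top_iff,
    Submodule.span_singleton_eq_bot]

theorem cyclicKrullDim_add_le (x y : M) :
    cyclicKrullDim A (x + y) ≤ max (cyclicKrullDim A x) (cyclicKrullDim A y) := by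
  have hann : (Submodule.span A {x}).annihilator ⊓ (Submodule.span A {y}).annihilator ≤
      (Submodule.span A {x + y}).annihilator := by
    intro a ⟨hx, hy⟩
    simp only [SetLike.mem_coe, Submodule.mem_annihilator_span_singleton] at hx hy ⊢
    rw [smul_add, hx, hy, add_zero]
  exact (ringKrullDim_quotient_antitone hann).trans (ringKrullDim_quotient_inf_le _ _)

theorem cyclicKrullDim_smul_le (a : A) (x : M) :
    cyclicKrullDim A (a • x) ≤ cyclicKrullDim A x :=
  ringKrullDim_quotient_antitone <| Submodule.annihilator_mono <|
    Submodule.span_singleton_le_iff_mem _ _ |>.mpr <|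
      Submodule.smul_mem _ a (Submodule.mem_span_singleton_self x)

variable (A M)

def cyclicKrullDimSubmodule (S : Set (WithBot ℕ∞)) (hS : IsLowerSet S) (hbot : ⊥ ∈ S) :
    Submodule A M where
  carrier := {m | cyclicKrullDim A m ∈ S}
  zero_mem' := by
    rwa [Set.mem_ofPred_eq, cyclicKrullDim_eq_bot_iff.mpr rfl]
  add_mem' {x y} hx hy :=
    hS (cyclicKrullDim_add_le x y) (max_rec' S hx hy)
  smul_mem' a x hx := hS (cyclicKrullDim_smul_le a x) hx

theorem cyclicKrullDimSubmodule_mono {S T : Set (WithBot ℕ∞)} {hS : IsLowerSet S}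
    {hT : IsLowerSet T} {hSbot : ⊥ ∈ S} {hTbot : ⊥ ∈ T} (hST : S ⊆ T) :
    cyclicKrullDimSubmodule A M S hS hSbot ≤ cyclicKrullDimSubmodule A M T hT hTbot :=
  fun _ hm => hST hm

end CyclicDim

/-- (a) For any commutative ring `A`, any `A`-module `M` and any `d : WithBot ℕ∞`, the set
`{m ∈ M | Krull dimension of A ⧸ ann(A•m) ≤ d}` is a submodule of `M`.
(b) Consequently, for a module over a polynomial ring in `n` variables, the sets
`t_r(M) = {m | codim of the cyclic module A•m is > r}`, i.e.
`{m | Krull dim of A ⧸ ann(A•m) < n - r}`, form a nested chain of submodules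
`0 = t_n(M) ⊆ t_{n-1}(M) ⊆ … ⊆ t_0(M) ⊆ M`. -/
theorem dimension_filtration_is_submodule :
    (∀ (A : Type*) [CommRing A] (M : Type*) [AddCommGroup M] [Module A M] (d : WithBot ℕ∞),
      ∃ N : Submodule A M,
        (N : Set M) = {m : M | ringKrullDim (A ⧸ (Submodule.span A {m}).annihilator) ≤ d}) ∧
    (∀ (k : Type*) [Field k] (n : ℕ)
      (M : Type*) [AddCommGroup M] [Module (MvPolynomial (Fin n) k) M],
      ∃ t : ℕ → Submodule (MvPolynomial (Fin n) k) M,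
        (∀ r : ℕ, (t r : Set M) = {m : M |
          ringKrullDim (MvPolynomial (Fin n) k ⧸
            (Submodule.span (MvPolynomial (Fin n) k) {m}).annihilator) <
              ((n - r : ℕ) : WithBot ℕ∞)}) ∧
        t n = ⊥ ∧
        (∀ r s : ℕ, r ≤ s → t s ≤ t r)) := by
  refine ⟨fun A _ M _ _ d =>
    ⟨cyclicKrullDimSubmodule A M (Set.Iic d) (isLowerSet_Iic d) (bot_le (a := d)), rfl⟩,
    fun k _ n M _ _ => ?_⟩
  refine ⟨fun r => cyclicKrullDimSubmodule _ M (Set.Iio ((n - r : ℕ) : WithBot ℕ∞))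
    (isLowerSet_Iio _) (WithBot.bot_lt_coe _), fun r => rfl, ?_, ?_⟩
  · ext m
    change cyclicKrullDim (MvPolynomial (Fin n) k) m < ((n - n : ℕ) : WithBot ℕ∞) ↔ m = 0
    rw [Nat.sub_self, Nat.cast_zero, WithBot.lt_zero_iff_eq_bot, cyclicKrullDim_eq_bot_iff]
  · intro r s hrs
    exact cyclicKrullDimSubmodule_mono _ _ <| Set.Iio_subset_Iio <| by
      exact_mod_cast Nat.sub_le_sub_left hrs n
end

section
/- Let k be a field, n ≥ 1, 0 ≤ r ≤ n, A = k[X₁,...,X_n], and B = k[X₁,...,X_{n−r}] the subring generated by the first n−r variables. Let M be a nonzero finitely generated A-module such that A/ann(M) is a finitely generated B-module and the Krull dimension of A/ann(M) equals n − r. Then M is r-pure, i.e. for every nonzero m ∈ M the Krull dimension of A/ann(A•m) equals n − r, if and only if the localization map M → S⁻¹M with S = B \ {0} is injective, i.e. no nonzero element of M is annihilated by a nonzero polynomial in the first n−r variables. -/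
/-!
For every `m : M` the map `B → A ⧸ ann(A • m)` is integral, since it factors through the
finite map `B → A ⧸ ann(M)`. Integral ring maps do not raise Krull dimension
(incomparability) and injective ones preserve it (going up). Hence `A ⧸ ann(A • m)` has
dimension `dim B = n - r` when no nonzero `s : B` kills `m`. A nonzero `s` killing `m` lies in
the kernel of that map, and cutting the domain `B` by a nonzero element lowers its dimension,
so then `A ⧸ ann(A • m)` has dimension below `n - r`.
-/

namespace RingHom.IsIntegral

variable {R S : Type*} [CommRing R] [CommRing S] {f : R →+* S}

theorem strictMono_comap (hf : f.IsIntegral) : StrictMono (PrimeSpectrum.comap f) := by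
  let _ := f.toAlgebra
  intro P Q hPQ
  obtain ⟨x, hxQ, hxP⟩ := SetLike.exists_of_lt (show P.asIdeal < Q.asIdeal from hPQ)
  exact Ideal.comap_lt_comap_of_integral_mem_sdiff hPQ.le ⟨hxQ, hxP⟩ (hf x)

theorem ringKrullDim_le (hf : f.IsIntegral) : ringKrullDim S ≤ ringKrullDim R :=
  Order.krullDim_le_of_strictMono _ hf.strictMono_comap

theorem ringKrullDim_eq (hf : f.IsIntegral) (hinj : Function.Injective f) :
    ringKrullDim S = ringKrullDim R := by
  let _ := f.toAlgebra
  have : Algebra.IsIntegral R S := ⟨hf⟩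
  have : FaithfulSMul R S := (faithfulSMul_iff_algebraMap_injective R S).mpr hinj
  refine le_antisymm hf.ringKrullDim_le (iSup_le fun l ↦ ?_)
  obtain ⟨⟨P, hP, hPl⟩⟩ := Ideal.nonempty_primesOver (S := S) l.head.asIdeal
  obtain ⟨L, hL, -⟩ := Ideal.exists_ltSeries_of_hasGoingUp l P
  exact hL ▸ Order.LTSeries.length_le_krullDim L

theorem ringKrullDim_add_one_le (hf : f.IsIntegral) {r : R} (hr : r ∈ nonZeroDivisors R)
    (hfr : f r = 0) : ringKrullDim S + 1 ≤ ringKrullDim R := by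
  grw [hf.kerLift.ringKrullDim_le]
  exact ringKrullDim_succ_le_of_surjective _ Ideal.Quotient.mk_surjective hr
    (Ideal.Quotient.eq_zero_iff_mem.mpr hfr)

end RingHom.IsIntegral

section Purity

variable {B A M : Type*} [CommRing B] [CommRing A] [AddCommGroup M] [Module A M]
  {φ : B →+* A}

theorem RingHom.IsIntegral.comp_quotient_annihilator_span_singleton
    (hφ : ((Ideal.Quotient.mk (Module.annihilator A M)).comp φ).IsIntegral) (m : M) :
    ((Ideal.Quotient.mk (Submodule.span A {m}).annihilator).comp φ).IsIntegral := by
  have hle : Module.annihilator A M ≤ (Submodule.span A {m}).annihilator := fun a ha ↦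
    (Submodule.mem_annihilator_span_singleton m a).mpr (Module.mem_annihilator.mp ha m)
  have hfactor : (Ideal.Quotient.mk (Submodule.span A {m}).annihilator).comp φ =
      (Ideal.Quotient.factor hle).comp ((Ideal.Quotient.mk (Module.annihilator A M)).comp φ) :=
    RingHom.ext fun _ ↦ rfl
  rw [hfactor]
  exact hφ.trans _ _ (RingHom.isIntegral_of_surjective _ (Ideal.Quotient.factor_surjective hle))

theorem ringKrullDim_quotient_annihilator_span_singleton_add_one_le
    (hφ : ((Ideal.Quotient.mk (Module.annihilator A M)).comp φ).IsIntegral) {m : M} {s : B}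
    (hs : s ∈ nonZeroDivisors B) (hsm : φ s • m = 0) :
    ringKrullDim (A ⧸ (Submodule.span A {m}).annihilator) + 1 ≤ ringKrullDim B :=
  (hφ.comp_quotient_annihilator_span_singleton m).ringKrullDim_add_one_le hs <|
    Ideal.Quotient.eq_zero_iff_mem.mpr ((Submodule.mem_annihilator_span_singleton m _).mpr hsm)

theorem ringKrullDim_quotient_annihilator_span_singleton_eq
    (hφ : ((Ideal.Quotient.mk (Module.annihilator A M)).comp φ).IsIntegral) {m : M}
    (htf : ∀ s : B, φ s • m = 0 → s = 0) :
    ringKrullDim (A ⧸ (Submodule.span A {m}).annihilator) = ringKrullDim B := by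
  refine (hφ.comp_quotient_annihilator_span_singleton m).ringKrullDim_eq ?_
  rw [injective_iff_map_eq_zero]
  exact fun s hs ↦ htf s <| (Submodule.mem_annihilator_span_singleton m _).mp
    (Ideal.Quotient.eq_zero_iff_mem.mp hs)

end Purity

theorem pure_iff_relative_localization_injective_general
    {k : Type*} [Field k] (n r : ℕ)
    {M : Type*} [AddCommGroup M] [Module (MvPolynomial (Fin n) k) M]
    (hfin : ((Ideal.Quotient.mk (Module.annihilator (MvPolynomial (Fin n) k) M)).comp
        (MvPolynomial.rename (R := k) (Fin.castLE (Nat.sub_le n r))).toRingHom).Finite) :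
    (∀ m : M, m ≠ 0 →
        ringKrullDim (MvPolynomial (Fin n) k ⧸
          (Submodule.span (MvPolynomial (Fin n) k) {m}).annihilator) =
            ((n - r : ℕ) : WithBot ℕ∞)) ↔
      (∀ (m : M) (s : MvPolynomial (Fin (n - r)) k), s ≠ 0 →
        (MvPolynomial.rename (Fin.castLE (Nat.sub_le n r)) s) • m = 0 → m = 0) := by
  have hint := hfin.to_isIntegral
  have hdimB : ringKrullDim (MvPolynomial (Fin (n - r)) k) = (n - r : ℕ) := by simp
  constructor
  · intro hpure m s hs hsm
    by_contra hm
    have := ringKrullDim_quotient_annihilator_span_singleton_add_one_le hint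
      (mem_nonZeroDivisors_of_ne_zero hs) hsm
    rw [hpure m hm, hdimB] at this
    norm_cast at this
    omega
  · intro htf m hm
    rw [ringKrullDim_quotient_annihilator_span_singleton_eq hint fun s hsm ↦
      by_contra fun hs ↦ hm (htf m s hs hsm), hdimB]

/-- (Purity test) Let `A = k[X₁,…,X_n]`, `B = k[X₁,…,X_{n-r}]` embedded in `A` via
renaming of variables, and let `M` be a nonzero finitely generated `A`-module such that
`A ⧸ ann(M)` is a finitely generated `B`-module and the Krull dimension of `A ⧸ ann(M)`
equals `n - r`. Then `M` is `r`-pure (every nonzero cyclic submodule has codimension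
exactly `r`) iff the localization map `M → S⁻¹M`, `S = B \ {0}`, is injective, i.e. no
nonzero element of `M` is killed by a nonzero polynomial in the first `n - r` variables. -/
theorem pure_iff_relative_localization_injective
    {k : Type*} [Field k] (n r : ℕ) (hn : 1 ≤ n) (hr : r ≤ n)
    {M : Type*} [AddCommGroup M] [Module (MvPolynomial (Fin n) k) M]
    [Module.Finite (MvPolynomial (Fin n) k) M] [Nontrivial M]
    (hfin : ((Ideal.Quotient.mk (Module.annihilator (MvPolynomial (Fin n) k) M)).comp
        (MvPolynomial.rename (R := k) (Fin.castLE (Nat.sub_le n r))).toRingHom).Finite)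
    (hdim : ringKrullDim (MvPolynomial (Fin n) k ⧸
        Module.annihilator (MvPolynomial (Fin n) k) M) = ((n - r : ℕ) : WithBot ℕ∞)) :
    (∀ m : M, m ≠ 0 →
        ringKrullDim (MvPolynomial (Fin n) k ⧸
          (Submodule.span (MvPolynomial (Fin n) k) {m}).annihilator) =
            ((n - r : ℕ) : WithBot ℕ∞)) ↔
      (∀ (m : M) (s : MvPolynomial (Fin (n - r)) k), s ≠ 0 →
        (MvPolynomial.rename (Fin.castLE (Nat.sub_le n r)) s) • m = 0 → m = 0) :=
  pure_iff_relative_localization_injective_general n r hfin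
end

section
/- (Macaulay's Hilbert series theorem for ideals of the principal class) Let k be a field, n ≥ 1, and let P₁, ..., P_r ∈ k[X₁,...,X_n] be homogeneous polynomials of degrees l₁, ..., l_r ≥ 1 forming a regular sequence. Let I = (P₁,...,P_r). Then for every q ≥ 0, the k-dimension of the image of the space of homogeneous polynomials of degree q under the quotient map k[X₁,...,X_n] → k[X₁,...,X_n]/I equals the coefficient of x^q in the formal power series (1 − x^{l₁})···(1 − x^{l_r}) · (∑_{j≥0} x^j)^n. -/
/-!
Induct on `r`. Let `I` be a homogeneous ideal, `p` homogeneous of degree `l` and regular on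
`A = k[X] ⧸ I`. In degree `q`, the kernel of `A → A ⧸ (p)` is `p · A_{q-l}`: a homogeneous
element of `I + (p)` agrees modulo `I` with the degree-`q` component of a multiple of `p`, since
`I` is homogeneous. As multiplication by `p` is injective,
`dim (A ⧸ (p))_q = dim A_q - dim A_{q-l}`, which multiplies the Hilbert series by `1 - x^l`.
For `I = 0` the monomials of degree `q` form a basis of `A_q`, and they are counted by the
coefficient of `x^q` in `(∑ x^j)^n`.
-/

open Module Finset

theorem LinearMap.finrank_map_add_finrank_inf_ker {K V W : Type*} [DivisionRing K]
    [AddCommGroup V] [Module K V] [AddCommGroup W] [Module K W] (f : V →ₗ[K] W)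
    (U : Submodule K V) [FiniteDimensional K U] :
    finrank K (U.map f) + finrank K ↥(U ⊓ LinearMap.ker f) = finrank K U := by
  have hrank := (f.domRestrict U).finrank_range_add_finrank_ker
  rwa [range_domRestrict, ker_domRestrict, (Submodule.equivMapOfInjective _
    U.injective_subtype (Submodule.comap U.subtype (ker f))).finrank_eq,
    Submodule.map_comap_subtype] at hrank

theorem Ideal.ofList_ofFn {R : Type*} [CommSemiring R] {r : ℕ} (P : Fin r → R) :
    Ideal.ofList (List.ofFn P) = Ideal.span (Set.range P) :=
  congrArg Ideal.span (Set.ext fun _ => List.mem_ofFn)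

theorem RingTheory.Sequence.isWeaklyRegular_ofFn_succ_iff {R : Type*} [CommRing R] {r : ℕ}
    (P : Fin (r + 1) → R) :
    IsWeaklyRegular R (List.ofFn P) ↔
      IsWeaklyRegular R (List.ofFn fun i => P i.castSucc) ∧
        IsSMulRegular (R ⧸ Ideal.span (Set.range fun i : Fin r => P i.castSucc))
          (P (Fin.last r)) := by
  rw [List.ofFn_succ', List.concat_eq_append, isWeaklyRegular_append_iff,
    isWeaklyRegular_singleton_iff, Ideal.smul_eq_mul, Ideal.mul_top, Ideal.ofList_ofFn]

theorem PowerSeries.coeff_mk_one_pow_card {R ι : Type*} [CommSemiring R] [Fintype ι]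
    [DecidableEq ι] (q : ℕ) :
    coeff q ((mk fun _ => (1 : R)) ^ Fintype.card ι) =
      #(finsuppAntidiag (univ : Finset ι) q) := by
  rw [← Finset.card_univ, ← Finset.prod_const, coeff_prod]
  simp

namespace MvPolynomial

attribute [local instance] gradedAlgebra

section CommSemiring

variable {σ R : Type*} [CommSemiring R]

theorem homogeneousComponent_mul_of_isHomogeneous {p : MvPolynomial σ R} {l : ℕ}
    (hp : p.IsHomogeneous l) (g : MvPolynomial σ R) (q : ℕ) :
    homogeneousComponent q (p * g) =
      if l ≤ q then p * homogeneousComponent (q - l) g else 0 := by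
  have hterm (j : ℕ) : homogeneousComponent q (p * homogeneousComponent j g) =
      if j = q - l ∧ l ≤ q then p * homogeneousComponent j g else 0 := by
    rw [homogeneousComponent_of_mem (hp.mul (homogeneousComponent_isHomogeneous j g))]
    congr 1
    simp only [eq_iff_iff]
    omega
  conv_lhs => rw [← sum_homogeneousComponent g, Finset.mul_sum, map_sum]
  simp_rw [hterm]
  split_ifs with hlq
  · simp only [hlq, and_true, Finset.sum_ite_eq', Finset.mem_range]
    split_ifs with hq
    · rfl
    · rw [homogeneousComponent_eq_zero _ g (by omega), mul_zero]
  · simp [hlq]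

theorem homogeneousComponent_mem_of_isHomogeneous {I : Ideal (MvPolynomial σ R)}
    (hI : I.IsHomogeneous (homogeneousSubmodule σ R)) {f : MvPolynomial σ R} (hf : f ∈ I)
    (q : ℕ) : homogeneousComponent q f ∈ I :=
  decomposition.decompose'_apply f q ▸ hI q hf

end CommSemiring

section Field

variable {σ k : Type*} [Field k]

instance [Finite σ] (q : ℕ) : FiniteDimensional k (homogeneousSubmodule σ k q) :=
  Module.Finite.iff_fg.mpr (homogeneousSubmodule_fg σ k q)

theorem finrank_homogeneousSubmodule [Fintype σ] [DecidableEq σ] (q : ℕ) :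
    finrank k (homogeneousSubmodule σ k q) = #(finsuppAntidiag (univ : Finset σ) q) := by
  have hdeg : {d : σ →₀ ℕ | d.degree = q} = ↑(finsuppAntidiag (univ : Finset σ) q) := by
    ext d
    simp [mem_finsuppAntidiag, Finsupp.degree_eq_sum]
  rw [((LinearEquiv.ofEq _ _ (homogeneousSubmodule_eq_finsupp_supported σ k q)).trans
    (AddMonoidAlgebra.supportedEquivFinsupp _)).finrank_eq, hdeg]
  simp

theorem exists_sub_homogeneousComponent_mul_mem {I : Ideal (MvPolynomial σ k)}
    (hI : I.IsHomogeneous (homogeneousSubmodule σ k)) {p f : MvPolynomial σ k} {q : ℕ}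
    (hf : f.IsHomogeneous q) (hfp : f ∈ I ⊔ Ideal.span {p}) :
    ∃ g, f - homogeneousComponent q (p * g) ∈ I := by
  obtain ⟨i, hi, _, hs, rfl⟩ := Submodule.mem_sup.mp hfp
  obtain ⟨g, rfl⟩ := Ideal.mem_span_singleton'.mp hs
  refine ⟨g, ?_⟩
  have hcomp : homogeneousComponent q (i + g * p) = i + g * p :=
    homogeneousComponent_of_mem (m := q) hf |>.trans (if_pos rfl)
  rw [← hcomp, mul_comm, map_add, add_sub_cancel_right]
  exact homogeneousComponent_mem_of_isHomogeneous hI hi q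

noncomputable def quotientHomogeneousSubmodule (I : Ideal (MvPolynomial σ k)) (q : ℕ) :
    Submodule k (MvPolynomial σ k ⧸ I) :=
  (homogeneousSubmodule σ k q).map (Ideal.Quotient.mkₐ k I).toLinearMap

instance [Finite σ] (I : Ideal (MvPolynomial σ k)) (q : ℕ) :
    FiniteDimensional k (quotientHomogeneousSubmodule I q) :=
  Module.Finite.map _ _

theorem finrank_quotientHomogeneousSubmodule_bot (q : ℕ) :
    finrank k (quotientHomogeneousSubmodule (⊥ : Ideal (MvPolynomial σ k)) q) =
      finrank k (homogeneousSubmodule σ k q) :=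
  have hinj : Function.Injective (Ideal.Quotient.mk (⊥ : Ideal (MvPolynomial σ k))) :=
    (RingHom.injective_iff_ker_eq_bot _).mpr Ideal.mk_ker
  (Submodule.equivMapOfInjective _ hinj _).finrank_eq.symm

theorem map_factorₐ_quotientHomogeneousSubmodule {I J : Ideal (MvPolynomial σ k)} (hIJ : I ≤ J)
    (q : ℕ) :
    (quotientHomogeneousSubmodule I q).map (Ideal.Quotient.factorₐ k hIJ).toLinearMap =
      quotientHomogeneousSubmodule J q := by
  rw [quotientHomogeneousSubmodule, quotientHomogeneousSubmodule, ← Submodule.map_comp]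
  rfl

theorem quotientHomogeneousSubmodule_inf_ker_factorₐ {I : Ideal (MvPolynomial σ k)}
    (hI : I.IsHomogeneous (homogeneousSubmodule σ k)) {p : MvPolynomial σ k} {l : ℕ}
    (hp : p.IsHomogeneous l) (q : ℕ) :
    quotientHomogeneousSubmodule I q ⊓ LinearMap.ker
        (Ideal.Quotient.factorₐ k (le_sup_left : I ≤ I ⊔ Ideal.span {p})).toLinearMap =
      if l ≤ q then
        (quotientHomogeneousSubmodule I (q - l)).map (LinearMap.mulLeft k (Ideal.Quotient.mk I p))
      else ⊥ := by
  apply le_antisymm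
  · rintro _ ⟨⟨f, hf, rfl⟩, hker⟩
    replace hker : f ∈ I ⊔ Ideal.span {p} := Ideal.Quotient.eq_zero_iff_mem.mp hker
    obtain ⟨g, hg⟩ := exists_sub_homogeneousComponent_mul_mem hI hf hker
    rw [homogeneousComponent_mul_of_isHomogeneous hp] at hg
    split_ifs with hlq
    · refine ⟨_, ⟨_, homogeneousComponent_isHomogeneous (q - l) g, rfl⟩, ?_⟩
      rw [if_pos hlq] at hg
      exact (Ideal.Quotient.eq.mpr hg).symm
    · rw [if_neg hlq, sub_zero] at hg
      exact (Submodule.mem_bot k).mpr (Ideal.Quotient.eq_zero_iff_mem.mpr hg)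
  · split_ifs with hlq
    · rintro _ ⟨_, ⟨g, hg, rfl⟩, rfl⟩
      refine ⟨⟨p * g, ?_, (map_mul (Ideal.Quotient.mk I) p g).symm⟩, ?_⟩
      · have hpg := hp.mul hg
        rwa [Nat.add_sub_cancel' hlq] at hpg
      · exact Ideal.Quotient.eq_zero_iff_mem.mpr
          (Ideal.mul_mem_right g _ (Submodule.mem_sup_right (Ideal.mem_span_singleton_self p)))
    · exact bot_le

theorem finrank_quotientHomogeneousSubmodule_sup_span_singleton [Finite σ]
    {I : Ideal (MvPolynomial σ k)} (hI : I.IsHomogeneous (homogeneousSubmodule σ k))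
    {p : MvPolynomial σ k} {l : ℕ} (hp : p.IsHomogeneous l)
    (hreg : IsSMulRegular (MvPolynomial σ k ⧸ I) p) (q : ℕ) :
    finrank k (quotientHomogeneousSubmodule (I ⊔ Ideal.span {p}) q) +
        (if l ≤ q then finrank k (quotientHomogeneousSubmodule I (q - l)) else 0) =
      finrank k (quotientHomogeneousSubmodule I q) := by
  have hrank := LinearMap.finrank_map_add_finrank_inf_ker
    (Ideal.Quotient.factorₐ k (le_sup_left : I ≤ I ⊔ Ideal.span {p})).toLinearMap
    (quotientHomogeneousSubmodule I q)
  rw [map_factorₐ_quotientHomogeneousSubmodule,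
    quotientHomogeneousSubmodule_inf_ker_factorₐ hI hp] at hrank
  -- `p • x` on `MvPolynomial σ k ⧸ I` unfolds to `Ideal.Quotient.mk I p * x`
  have hmul : Function.Injective (LinearMap.mulLeft k (Ideal.Quotient.mk I p)) := hreg
  by_cases hlq : l ≤ q
  · rw [if_pos hlq, ← (Submodule.equivMapOfInjective _ hmul _).finrank_eq] at hrank
    rwa [if_pos hlq]
  · rw [if_neg hlq] at hrank ⊢
    simpa using hrank

theorem finrank_quotientHomogeneousSubmodule_span_of_isWeaklyRegular [Fintype σ] {r : ℕ}
    (l : Fin r → ℕ) (P : Fin r → MvPolynomial σ k) (hP : ∀ i, (P i).IsHomogeneous (l i))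
    (hreg : RingTheory.Sequence.IsWeaklyRegular (MvPolynomial σ k) (List.ofFn P)) (q : ℕ) :
    (finrank k (quotientHomogeneousSubmodule (Ideal.span (Set.range P)) q) : ℤ) =
      PowerSeries.coeff q
        ((∏ i, (1 - PowerSeries.X ^ l i)) *
          (PowerSeries.mk fun _ => (1 : ℤ)) ^ Fintype.card σ) := by
  classical
  induction r generalizing q with
  | zero =>
    rw [Set.range_eq_empty, Ideal.span_empty, finrank_quotientHomogeneousSubmodule_bot,
      finrank_homogeneousSubmodule]
    simp [PowerSeries.coeff_mk_one_pow_card]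
  | succ r ih =>
    set P' : Fin r → MvPolynomial σ k := fun i => P i.castSucc
    obtain ⟨hreg', hsmul⟩ := (RingTheory.Sequence.isWeaklyRegular_ofFn_succ_iff P).mp hreg
    have ih' := ih (fun i => l i.castSucc) P' (fun i => hP i.castSucc) hreg'
    have hspan : Ideal.span (Set.range P) =
        Ideal.span (Set.range P') ⊔ Ideal.span {P (Fin.last r)} := by
      rw [← Ideal.ofList_ofFn, ← Ideal.ofList_ofFn, List.ofFn_succ', List.concat_eq_append,
        Ideal.ofList_append, Ideal.ofList_singleton]
    have hhom : (Ideal.span (Set.range P')).IsHomogeneous (homogeneousSubmodule σ k) :=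
      Ideal.homogeneous_span _ _ (by rintro _ ⟨i, rfl⟩; exact ⟨_, hP i.castSucc⟩)
    have hstep :=
      finrank_quotientHomogeneousSubmodule_sup_span_singleton hhom (hP (Fin.last r)) hsmul q
    rw [Fin.prod_univ_castSucc, mul_right_comm, mul_sub, mul_one, map_sub,
      PowerSeries.coeff_mul_X_pow', ← ih', hspan, ← hstep]
    split_ifs
    · rw [← ih']
      push_cast
      ring
    · push_cast
      ring

end Field

end MvPolynomial

theorem hilbert_series_of_regular_sequence_general
    {k : Type*} [Field k] (n : ℕ) (r : ℕ)
    (l : Fin r → ℕ)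
    (P : Fin r → MvPolynomial (Fin n) k)
    (hP : ∀ i, (P i).IsHomogeneous (l i))
    (hreg : RingTheory.Sequence.IsRegular (MvPolynomial (Fin n) k) (List.ofFn P)) :
    ∀ q : ℕ,
      (Module.finrank k
        ↥(Submodule.map (Ideal.Quotient.mkₐ k (Ideal.span (Set.range P))).toLinearMap
          (MvPolynomial.homogeneousSubmodule (Fin n) k q)) : ℤ) =
      PowerSeries.coeff (R := ℤ) q
        ((∏ i : Fin r, (1 - PowerSeries.X ^ l i)) *
          (PowerSeries.mk fun _ => (1 : ℤ)) ^ n) := by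
  intro q
  have h := MvPolynomial.finrank_quotientHomogeneousSubmodule_span_of_isWeaklyRegular l P hP
    hreg.toIsWeaklyRegular q
  rwa [Fintype.card_fin] at h

/-- (Macaulay's Hilbert series theorem for ideals of the principal class) If
`P₁, …, P_r` are homogeneous polynomials of degrees `l₁, …, l_r ≥ 1` in `k[X₁,…,X_n]`
forming a regular sequence, and `I = (P₁,…,P_r)`, then for every `q` the `k`-dimension
of the image of the degree-`q` homogeneous component under the quotient map
`k[X₁,…,X_n] → k[X₁,…,X_n]/I` equals the coefficient of `x^q` in
`(1 - x^{l₁}) ⋯ (1 - x^{l_r}) · (∑_{j≥0} x^j)^n`. -/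
theorem hilbert_series_of_regular_sequence
    {k : Type*} [Field k] (n : ℕ) (hn : 1 ≤ n) (r : ℕ)
    (l : Fin r → ℕ) (hl : ∀ i, 1 ≤ l i)
    (P : Fin r → MvPolynomial (Fin n) k)
    (hP : ∀ i, (P i).IsHomogeneous (l i))
    (hreg : RingTheory.Sequence.IsRegular (MvPolynomial (Fin n) k) (List.ofFn P)) :
    ∀ q : ℕ,
      (Module.finrank k
        ↥(Submodule.map (Ideal.Quotient.mkₐ k (Ideal.span (Set.range P))).toLinearMap
          (MvPolynomial.homogeneousSubmodule (Fin n) k q)) : ℤ) =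
      PowerSeries.coeff (R := ℤ) q
        ((∏ i : Fin r, (1 - PowerSeries.X ^ l i)) *
          (PowerSeries.mk fun _ => (1 : ℤ)) ^ n) :=
  hilbert_series_of_regular_sequence_general n r l P hP hreg
end

section
/- Let k be a field and consider the polynomial ring k[X₁,X₂,X₃,X₄]. The ideal q = (X₄², X₃X₄ − X₂², X₃², X₂X₄ − X₁²) is a primary ideal whose radical equals the maximal ideal m = (X₁, X₂, X₃, X₄), and the quotient ring k[X₁,X₂,X₃,X₄]/q is a finite-dimensional k-vector space of dimension 16 = 2⁴. -/
/-!
The quotient `k[X₀,X₁,X₂,X₃]/q` is the iterated quadratic extension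
`k[x₃]/(x₃²) [x₂]/(x₂²) [x₁]/(x₁² - x₂x₃) [x₀]/(x₀² - x₁x₃)`: sending `Xᵢ ↦ xᵢ` and `xᵢ ↦ Xᵢ`
gives mutually inverse algebra maps. Each step is free of rank 2 over the previous one,
so the dimension is `2⁴ = 16`.

The radical contains `X₃` and `X₂`, hence `X₁` (as `X₁² ≡ X₂X₃`) and `X₀` (as `X₀² ≡ X₁X₃`),
so it is the maximal ideal of the origin, and an ideal with maximal radical is primary.
-/

open MvPolynomial

theorem AdjoinRoot.finrank_eq_finrank_mul_natDegree {K A : Type*} [Field K] [CommRing A]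
    [Algebra K A] {f : Polynomial A} (hf : f.Monic) :
    Module.finrank K (AdjoinRoot f) = Module.finrank K A * f.natDegree := by
  -- `Nat.card` of an infinite index type is `0`, so no finiteness assumption is needed.
  let b := Module.Free.chooseBasis K A
  rw [Module.finrank_eq_nat_card_basis (b.smulTower (powerBasis' hf).basis),
    Module.finrank_eq_nat_card_basis b, Nat.card_prod]
  simp

theorem MvPolynomial.idealOfVars_eq_ker_constantCoeff {σ R : Type*} [CommSemiring R] :
    idealOfVars σ R = RingHom.ker (constantCoeff (σ := σ) (R := R)) := by
  ext p
  rw [← pow_one (idealOfVars σ R), mem_pow_idealOfVars_iff', RingHom.mem_ker]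
  simp [Finsupp.degree_eq_zero_iff, constantCoeff_eq]

theorem MvPolynomial.isMaximal_idealOfVars {σ K : Type*} [Field K] :
    (idealOfVars σ K).IsMaximal := by
  rw [idealOfVars_eq_ker_constantCoeff]
  exact RingHom.ker_isMaximal_of_surjective _ fun a => ⟨C a, constantCoeff_C _ a⟩

theorem Ideal.mem_radical_of_mul_sub_sq_mem {R : Type*} [CommRing R] {I : Ideal R} {a b x : R}
    (h : a * b - x ^ 2 ∈ I) (hb : b ∈ I.radical) : x ∈ I.radical :=
  I.radical_isRadical ⟨2, by simpa using sub_mem (I.radical.mul_mem_left a hb) (I.le_radical h)⟩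

noncomputable section

abbrev AdjoinSqrt {A : Type*} [CommRing A] (c : A) :=
  AdjoinRoot (Polynomial.X ^ 2 - Polynomial.C c)

namespace AdjoinSqrt

variable {A : Type*} [CommRing A] (c : A)

theorem monic : (Polynomial.X ^ 2 - Polynomial.C c).Monic :=
  Polynomial.monic_X_pow_sub_C c two_ne_zero

instance [Nontrivial A] : Nontrivial (AdjoinSqrt c) :=
  Module.nontrivial_of_finrank_pos (R := A)
    (by rw [(AdjoinRoot.powerBasis' (monic c)).finrank]; simp)

theorem finrank_eq {K : Type*} [Field K] [Algebra K A] [Nontrivial A] :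
    Module.finrank K (AdjoinSqrt c) = Module.finrank K A * 2 := by
  rw [AdjoinRoot.finrank_eq_finrank_mul_natDegree (monic c), Polynomial.natDegree_X_pow_sub_C]

def root : AdjoinSqrt c := AdjoinRoot.root _

theorem root_sq : root c ^ 2 = algebraMap A _ c := by
  have h := AdjoinRoot.eval₂_root (Polynomial.X ^ 2 - Polynomial.C c)
  rwa [Polynomial.eval₂_sub, Polynomial.eval₂_X_pow, Polynomial.eval₂_C, sub_eq_zero] at h

variable {c} {K T : Type*} [CommRing K] [CommRing T] [Algebra K A] [Algebra K T]

def liftAlgHom (i : A →ₐ[K] T) (y : T) (hy : y ^ 2 = i c) : AdjoinSqrt c →ₐ[K] T :=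
  AdjoinRoot.liftAlgHom _ i y (by simp [hy])

@[simp]
theorem liftAlgHom_root (i : A →ₐ[K] T) (y : T) (hy : y ^ 2 = i c) :
    liftAlgHom i y hy (root c) = y :=
  AdjoinRoot.liftAlgHom_root ..

@[simp]
theorem liftAlgHom_algebraMap (i : A →ₐ[K] T) (y : T) (hy : y ^ 2 = i c) (a : A) :
    liftAlgHom i y hy (algebraMap A _ a) = i a :=
  AdjoinRoot.liftAlgHom_of ..

end AdjoinSqrt

namespace PrimaryIdealExample

open AdjoinSqrt (root root_sq liftAlgHom liftAlgHom_root liftAlgHom_algebraMap)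

variable (k : Type*) [Field k]

abbrev q : Ideal (MvPolynomial (Fin 4) k) :=
  Ideal.span {X 3 ^ 2, X 2 * X 3 - X 1 ^ 2, X 2 ^ 2, X 1 * X 3 - X 0 ^ 2}

abbrev R₃ := AdjoinSqrt (0 : k)
abbrev x₃ : R₃ k := root _
abbrev R₂ := AdjoinSqrt (0 : R₃ k)
abbrev x₂ : R₂ k := root _
abbrev R₁ := AdjoinSqrt (x₂ k * algebraMap _ (R₂ k) (x₃ k))
abbrev x₁ : R₁ k := root _
abbrev R₀ := AdjoinSqrt (x₁ k * algebraMap _ (R₁ k) (x₃ k))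
abbrev x₀ : R₀ k := root _

theorem x₃_sq : x₃ k ^ 2 = 0 := (root_sq _).trans (map_zero _)
theorem x₂_sq : x₂ k ^ 2 = 0 := (root_sq _).trans (map_zero _)
theorem x₁_sq : x₁ k ^ 2 = algebraMap _ _ (x₂ k * algebraMap _ (R₂ k) (x₃ k)) := root_sq _
theorem x₀_sq : x₀ k ^ 2 = algebraMap _ _ (x₁ k * algebraMap _ (R₁ k) (x₃ k)) := root_sq _

theorem finrank_R₀ : Module.finrank k (R₀ k) = 16 := by
  simp only [AdjoinSqrt.finrank_eq, Module.finrank_self]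

def x : Fin 4 → R₀ k :=
  ![x₀ k, algebraMap _ _ (x₁ k), algebraMap _ _ (x₂ k), algebraMap _ _ (x₃ k)]

theorem q_le_ker_aeval_x : q k ≤ RingHom.ker (aeval (x k)) := by
  simp only [Ideal.span_le, Set.insert_subset_iff, Set.singleton_subset_iff, SetLike.mem_coe,
    RingHom.mem_ker, map_sub, map_mul, map_pow, aeval_X, x, Matrix.cons_val]
  simp only [← map_pow, x₀_sq, x₁_sq, x₂_sq, x₃_sq, ← IsScalarTower.algebraMap_apply, map_mul,
    map_zero, sub_self, and_self]

abbrev Q := MvPolynomial (Fin 4) k ⧸ q k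

def toTower : Q k →ₐ[k] R₀ k :=
  Ideal.Quotient.liftₐ (q k) (aeval (x k)) fun _ hp => q_le_ker_aeval_x k hp

def z (i : Fin 4) : Q k := Ideal.Quotient.mk (q k) (X i)

theorem z_three_sq : z k 3 ^ 2 = 0 := by
  rw [z, ← map_pow, Ideal.Quotient.eq_zero_iff_mem]
  exact Ideal.subset_span (by simp)

theorem z_two_sq : z k 2 ^ 2 = 0 := by
  rw [z, ← map_pow, Ideal.Quotient.eq_zero_iff_mem]
  exact Ideal.subset_span (by simp)

theorem z_two_mul_z_three : z k 2 * z k 3 = z k 1 ^ 2 := by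
  rw [z, z, z, ← map_pow, ← map_mul, Ideal.Quotient.eq]
  exact Ideal.subset_span (by simp)

theorem z_one_mul_z_three : z k 1 * z k 3 = z k 0 ^ 2 := by
  rw [z, z, z, ← map_pow, ← map_mul, Ideal.Quotient.eq]
  exact Ideal.subset_span (by simp)

def ofTower₃ : R₃ k →ₐ[k] Q k :=
  liftAlgHom (Algebra.ofId k _) (z k 3) (by rw [map_zero, z_three_sq])

def ofTower₂ : R₂ k →ₐ[k] Q k :=
  liftAlgHom (ofTower₃ k) (z k 2) (by rw [map_zero, z_two_sq])

def ofTower₁ : R₁ k →ₐ[k] Q k :=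
  liftAlgHom (ofTower₂ k) (z k 1) (by
    simp only [ofTower₂, ofTower₃, map_mul, liftAlgHom_algebraMap, liftAlgHom_root,
      z_two_mul_z_three])

def ofTower₀ : R₀ k →ₐ[k] Q k :=
  liftAlgHom (ofTower₁ k) (z k 0) (by
    simp only [ofTower₁, ofTower₂, ofTower₃, map_mul,
      IsScalarTower.algebraMap_apply (R₃ k) (R₂ k) (R₁ k), liftAlgHom_algebraMap,
      liftAlgHom_root, z_one_mul_z_three])

theorem toTower_z (i : Fin 4) : toTower k (z k i) = x k i := aeval_X (x k) i

theorem ofTower₀_x (i : Fin 4) : ofTower₀ k (x k i) = z k i := by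
  fin_cases i
  · exact liftAlgHom_root ..
  · exact (liftAlgHom_algebraMap ..).trans (liftAlgHom_root ..)
  · change ofTower₀ k (algebraMap (R₁ k) _ (algebraMap (R₂ k) _ (x₂ k))) = z k 2
    simp only [ofTower₀, ofTower₁, ofTower₂, liftAlgHom_algebraMap, liftAlgHom_root]
  · change ofTower₀ k (algebraMap (R₁ k) _ (algebraMap (R₂ k) _ (algebraMap (R₃ k) _ (x₃ k)))) =
      z k 3
    simp only [ofTower₀, ofTower₁, ofTower₂, ofTower₃, liftAlgHom_algebraMap, liftAlgHom_root]

theorem ofTower_comp_toTower : (ofTower₀ k).comp (toTower k) = AlgHom.id k (Q k) := by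
  apply Ideal.Quotient.algHom_ext
  apply MvPolynomial.algHom_ext
  intro i
  exact (congrArg (ofTower₀ k) (toTower_z k i)).trans (ofTower₀_x k i)

theorem toTower_comp_ofTower : (toTower k).comp (ofTower₀ k) = AlgHom.id k (R₀ k) := by
  have h i : toTower k (ofTower₀ k (x k i)) = x k i :=
    (congrArg (toTower k) (ofTower₀_x k i)).trans (toTower_z k i)
  ext
  exacts [h 3, h 2, h 1, h 0]

def equivTower : Q k ≃ₐ[k] R₀ k :=
  AlgEquiv.ofAlgHom (toTower k) (ofTower₀ k) (toTower_comp_ofTower k) (ofTower_comp_toTower k)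

theorem finrank_Q : Module.finrank k (Q k) = 16 :=
  (equivTower k).toLinearEquiv.finrank_eq.trans (finrank_R₀ k)

theorem span_X_eq_idealOfVars :
    Ideal.span {(X 0 : MvPolynomial (Fin 4) k), X 1, X 2, X 3} = idealOfVars (Fin 4) k := by
  simp [idealOfVars, Fin.range_fin_succ, Fin.tail]

theorem q_le_idealOfVars : q k ≤ idealOfVars (Fin 4) k := by
  rw [idealOfVars_eq_ker_constantCoeff, Ideal.span_le]
  simp [Set.insert_subset_iff]

theorem radical_q : (q k).radical = idealOfVars (Fin 4) k := by
  refine le_antisymm ?_ ?_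
  · calc (q k).radical ≤ (idealOfVars (Fin 4) k).radical := Ideal.radical_mono (q_le_idealOfVars k)
      _ = idealOfVars (Fin 4) k := isMaximal_idealOfVars.isPrime.radical
  · have h₃ : X 3 ∈ (q k).radical := ⟨2, Ideal.subset_span (by simp)⟩
    have h₂ : X 2 ∈ (q k).radical := ⟨2, Ideal.subset_span (by simp)⟩
    have h₁ : X 1 ∈ (q k).radical :=
      Ideal.mem_radical_of_mul_sub_sq_mem (a := X 2) (Ideal.subset_span (by simp)) h₃
    have h₀ : X 0 ∈ (q k).radical :=
      Ideal.mem_radical_of_mul_sub_sq_mem (a := X 1) (Ideal.subset_span (by simp)) h₃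
    rw [idealOfVars, Ideal.span_le, Set.range_subset_iff]
    intro i
    fin_cases i
    exacts [h₀, h₁, h₂, h₃]

end PrimaryIdealExample

end

/-- In `k[X₁,X₂,X₃,X₄]`, the ideal `q = (X₄², X₃X₄ - X₂², X₃², X₂X₄ - X₁²)` is primary,
its radical is the maximal ideal `m = (X₁,X₂,X₃,X₄)`, and the quotient ring is a
`k`-vector space of dimension `16 = 2⁴`. -/
theorem primary_ideal_example_dimension_sixteen
    {k : Type*} [Field k] :
    (Ideal.span {(X 3 : MvPolynomial (Fin 4) k) ^ 2, X 2 * X 3 - X 1 ^ 2,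
        X 2 ^ 2, X 1 * X 3 - X 0 ^ 2}).IsPrimary ∧
    (Ideal.span {(X 3 : MvPolynomial (Fin 4) k) ^ 2, X 2 * X 3 - X 1 ^ 2,
        X 2 ^ 2, X 1 * X 3 - X 0 ^ 2}).radical =
      Ideal.span {(X 0 : MvPolynomial (Fin 4) k), X 1, X 2, X 3} ∧
    (Ideal.span {(X 0 : MvPolynomial (Fin 4) k), X 1, X 2, X 3}).IsMaximal ∧
    FiniteDimensional k (MvPolynomial (Fin 4) k ⧸
      Ideal.span {(X 3 : MvPolynomial (Fin 4) k) ^ 2, X 2 * X 3 - X 1 ^ 2,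
        X 2 ^ 2, X 1 * X 3 - X 0 ^ 2}) ∧
    Module.finrank k (MvPolynomial (Fin 4) k ⧸
      Ideal.span {(X 3 : MvPolynomial (Fin 4) k) ^ 2, X 2 * X 3 - X 1 ^ 2,
        X 2 ^ 2, X 1 * X 3 - X 0 ^ 2}) = 16 := by
  have hrad := PrimaryIdealExample.radical_q k
  have hfinrank := PrimaryIdealExample.finrank_Q k
  rw [PrimaryIdealExample.span_X_eq_idealOfVars]
  exact ⟨Ideal.isPrimary_of_isMaximal_radical (hrad ▸ isMaximal_idealOfVars), hrad,
    isMaximal_idealOfVars, Module.finite_of_finrank_pos (hfinrank ▸ by norm_num), hfinrank⟩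
end

section
/- Let k be a field and consider the polynomial ring k[X₁,X₂,X₃]. The ideal q' = (X₃² − X₁², X₂X₃, X₂² − X₁²) is a primary ideal whose radical equals the maximal ideal m = (X₁, X₂, X₃), and the quotient ring k[X₁,X₂,X₃]/q' is a finite-dimensional k-vector space of dimension 8 = 2³. -/
/-!
The classes of `1, x₀, x₁, x₂, x₀², x₀x₁, x₀x₂, x₀³` span `A = k[X₀,X₁,X₂]/q'`: their span
contains `1` and is stable under multiplication by each `xᵢ`, because `x₁² = x₂² = x₀²` and
`x₁x₂ = 0` force `x₀²x₁ = x₀²x₂ = x₀⁴ = 0`. They are linearly independent because the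
multiplication table they define is realised by three commuting `8 × 8` matrices satisfying the
relations of `q'`; so `A` acts on `k⁸`, and `a ↦ a • e₀` sends them to the standard basis.
Since every `xᵢ` is nilpotent in `A`, the radical of `q'` is the maximal ideal `(X₀, X₁, X₂)`,
hence `q'` is primary.
-/

open MvPolynomial LinearMap

namespace MvPolynomial

theorem idealOfVars_eq_ker_constantCoeff_s19 (σ R : Type*) [CommSemiring R] :
    idealOfVars σ R = RingHom.ker (constantCoeff : MvPolynomial σ R →+* R) := by
  ext p
  rw [← pow_one (idealOfVars σ R), mem_pow_idealOfVars_iff', RingHom.mem_ker]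
  simp [Finsupp.degree_eq_zero_iff, constantCoeff_eq]

theorem isMaximal_idealOfVars_s19 (σ K : Type*) [Field K] : (idealOfVars σ K).IsMaximal := by
  rw [idealOfVars_eq_ker_constantCoeff_s19]
  exact RingHom.ker_isMaximal_of_surjective _ fun a => ⟨C a, constantCoeff_C _ a⟩

end MvPolynomial

theorem Submodule.eq_top_of_one_mem_of_mul_mem {R A : Type*} [CommSemiring R] [Semiring A]
    [Algebra R A] {s : Set A} (hs : Algebra.adjoin R s = ⊤) {M : Submodule R A} (h1 : 1 ∈ M)
    (hmul : ∀ a ∈ s, ∀ m ∈ M, a * m ∈ M) : M = ⊤ := by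
  suffices h : ∀ a ∈ Algebra.adjoin R s, ∀ m ∈ M, a * m ∈ M from
    eq_top_iff.mpr fun a _ => mul_one a ▸ h a (hs ▸ Algebra.mem_top) 1 h1
  intro a ha
  induction ha using Algebra.adjoin_induction with
  | mem a ha => exact hmul a ha
  | algebraMap r =>
    intro m hm
    rw [Algebra.algebraMap_eq_smul_one, smul_mul_assoc, one_mul]
    exact M.smul_mem r hm
  | add a b _ _ ha hb =>
    intro m hm
    rw [add_mul]
    exact M.add_mem (ha m hm) (hb m hm)
  | mul a b _ _ ha hb =>
    intro m hm
    rw [mul_assoc]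
    exact ha _ (hb m hm)

noncomputable section

namespace QuadricExample

def monomials {R : Type*} [CommRing R] (g : Fin 3 → R) : Fin 8 → R :=
  ![1, g 0, g 1, g 2, g 0 ^ 2, g 0 * g 1, g 0 * g 2, g 0 ^ 3]

structure QuadricRelations {R : Type*} [CommRing R] (g : Fin 3 → R) : Prop where
  one_sq : g 1 ^ 2 = g 0 ^ 2
  two_sq : g 2 ^ 2 = g 0 ^ 2
  one_mul_two : g 1 * g 2 = 0

variable (k : Type*) [CommRing k]

/-- Multiplication by `g 0`, `g 1`, `g 2` in the coordinates of `monomials g`, read off from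
`QuadricRelations g`. -/
def mulTable : Fin 3 → Module.End k (Fin 8 → k) :=
  ![pi ![0, proj 0, 0, 0, proj 1, proj 2, proj 3, proj 4],
    pi ![0, 0, proj 0, 0, proj 2, proj 1, 0, proj 5],
    pi ![0, 0, 0, proj 0, proj 3, 0, proj 1, proj 6]]

variable {k}

theorem mulTable_commute (i j : Fin 3) :
    mulTable k i * mulTable k j = mulTable k j * mulTable k i := by
  refine LinearMap.ext fun v => funext fun l => ?_
  fin_cases i <;> fin_cases j <;> fin_cases l <;> simp [mulTable]

theorem mulTable_one_sq : mulTable k 1 ^ 2 = mulTable k 0 ^ 2 := by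
  refine LinearMap.ext fun v => funext fun l => ?_
  fin_cases l <;> simp [mulTable, sq]

theorem mulTable_two_sq : mulTable k 2 ^ 2 = mulTable k 0 ^ 2 := by
  refine LinearMap.ext fun v => funext fun l => ?_
  fin_cases l <;> simp [mulTable, sq]

theorem mulTable_one_mul_mulTable_two : mulTable k 1 * mulTable k 2 = 0 := by
  refine LinearMap.ext fun v => funext fun l => ?_
  fin_cases l <;> simp [mulTable]

namespace QuadricRelations

variable {R : Type*} [CommRing R] {g : Fin 3 → R}

theorem pow_four_eq_zero (hg : QuadricRelations g) (i : Fin 3) : g i ^ 4 = 0 := by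
  obtain ⟨_, _, _⟩ := hg
  fin_cases i <;> simp <;> grind

variable [Algebra k R]

theorem mul_monomials (hg : QuadricRelations g) (i : Fin 3) (j : Fin 8) :
    g i * monomials g j =
      Fintype.linearCombination k (monomials g) (mulTable k i (Pi.single j 1)) := by
  obtain ⟨_, _, _⟩ := hg
  fin_cases i <;> fin_cases j <;>
    simp [Fintype.linearCombination_apply, Fin.sum_univ_eight, monomials, mulTable] <;> grind

theorem mul_linearCombination_monomials (hg : QuadricRelations g) (i : Fin 3) (v : Fin 8 → k) :
    g i * Fintype.linearCombination k (monomials g) v =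
      Fintype.linearCombination k (monomials g) (mulTable k i v) := by
  have : LinearMap.mulLeft k (g i) ∘ₗ Fintype.linearCombination k (monomials g) =
      Fintype.linearCombination k (monomials g) ∘ₗ mulTable k i := by
    ext j
    simpa using hg.mul_monomials i j
  exact LinearMap.congr_fun this v

theorem linearCombination_monomials_surjective (hg : QuadricRelations g)
    (hgen : Algebra.adjoin k (Set.range g) = ⊤) :
    Function.Surjective (Fintype.linearCombination k (monomials g)) := by
  rw [← LinearMap.range_eq_top]
  refine Submodule.eq_top_of_one_mem_of_mul_mem hgen ⟨Pi.single 0 1, by simp [monomials]⟩ ?_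
  rintro _ ⟨i, rfl⟩ _ ⟨v, rfl⟩
  exact ⟨mulTable k i v, (hg.mul_linearCombination_monomials i v).symm⟩

end QuadricRelations

variable (k)

def q : Ideal (MvPolynomial (Fin 3) k) :=
  Ideal.span {X 2 ^ 2 - X 0 ^ 2, X 1 * X 2, X 1 ^ 2 - X 0 ^ 2}

abbrev A := MvPolynomial (Fin 3) k ⧸ q k

def x (i : Fin 3) : A k := Ideal.Quotient.mk (q k) (X i)

variable {k}

theorem quadricRelations_x : QuadricRelations (x k) where
  one_sq := Ideal.Quotient.eq.mpr (Ideal.subset_span (by simp))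
  two_sq := Ideal.Quotient.eq.mpr (Ideal.subset_span (by simp))
  one_mul_two := Ideal.Quotient.eq_zero_iff_mem.mpr (Ideal.subset_span (by simp))

theorem adjoin_range_x : Algebra.adjoin k (Set.range (x k)) = ⊤ := by
  rw [show Set.range (x k) = Ideal.Quotient.mkₐ k (q k) '' Set.range X by
      rw [← Set.range_comp]; rfl,
    ← AlgHom.map_adjoin, adjoin_range_X, Algebra.map_top, AlgHom.range_eq_top]
  exact Ideal.Quotient.mkₐ_surjective k (q k)

theorem q_le_ker_aeval {R : Type*} [CommRing R] [Algebra k R] {g : Fin 3 → R}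
    (hg : QuadricRelations g) : q k ≤ RingHom.ker (aeval g) := by
  rw [q, Ideal.span_le, Set.insert_subset_iff, Set.insert_subset_iff, Set.singleton_subset_iff]
  simp only [SetLike.mem_coe, RingHom.mem_ker, map_sub, map_mul, map_pow, aeval_X, sub_eq_zero]
  exact ⟨hg.two_sq, hg.one_mul_two, hg.one_sq⟩

def lift {R : Type*} [CommRing R] [Algebra k R] {g : Fin 3 → R} (hg : QuadricRelations g) :
    A k →ₐ[k] R :=
  Ideal.Quotient.liftₐ (q k) (aeval g) fun _ ha => RingHom.mem_ker.mp (q_le_ker_aeval hg ha)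

theorem lift_x {R : Type*} [CommRing R] [Algebra k R] {g : Fin 3 → R} (hg : QuadricRelations g)
    (i : Fin 3) : lift hg (x k i) = g i :=
  aeval_X g i

theorem q_le_idealOfVars : q k ≤ idealOfVars (Fin 3) k := by
  rw [idealOfVars_eq_ker_constantCoeff_s19, q, Ideal.span_le]
  simp [Set.insert_subset_iff]

theorem radical_q {K : Type*} [Field K] : (q K).radical = idealOfVars (Fin 3) K := by
  refine le_antisymm ?_ ?_
  · calc (q K).radical ≤ (idealOfVars (Fin 3) K).radical := Ideal.radical_mono q_le_idealOfVars
      _ = idealOfVars (Fin 3) K := (isMaximal_idealOfVars_s19 _ _).isPrime.radical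
  · refine Ideal.span_le.mpr (Set.range_subset_iff.mpr fun i => ⟨4, ?_⟩)
    rw [← Ideal.Quotient.eq_zero_iff_mem, map_pow]
    exact quadricRelations_x.pow_four_eq_zero i

open scoped IsMulCommutative

instance : IsMulCommutative (Algebra.adjoin k (Set.range (mulTable k))) :=
  Algebra.isMulCommutative_adjoin k <| by
    rintro _ ⟨i, rfl⟩ _ ⟨j, rfl⟩
    exact mulTable_commute i j

def mulTableAlg (i : Fin 3) : Algebra.adjoin k (Set.range (mulTable k)) :=
  ⟨mulTable k i, Algebra.subset_adjoin ⟨i, rfl⟩⟩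

theorem quadricRelations_mulTableAlg : QuadricRelations (mulTableAlg (k := k)) where
  one_sq := Subtype.ext mulTable_one_sq
  two_sq := Subtype.ext mulTable_two_sq
  one_mul_two := Subtype.ext mulTable_one_mul_mulTable_two

def orbit : A k →ₗ[k] Fin 8 → k :=
  applyₗ (Pi.single 0 1) ∘ₗ (Algebra.adjoin k (Set.range (mulTable k))).val.toLinearMap ∘ₗ
    (lift quadricRelations_mulTableAlg).toLinearMap

theorem orbit_apply (a : A k) :
    orbit a = ((lift quadricRelations_mulTableAlg a : Algebra.adjoin k (Set.range (mulTable k))) :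
      Module.End k (Fin 8 → k)) (Pi.single 0 1) :=
  rfl

theorem orbit_monomials (j : Fin 8) : orbit (monomials (x k) j) = Pi.single j 1 := by
  funext l
  fin_cases j <;> simp [orbit_apply, monomials, lift_x, mulTableAlg, pow_succ] <;>
    fin_cases l <;> simp [mulTable]

theorem orbit_linearCombination_monomials (v : Fin 8 → k) :
    orbit (Fintype.linearCombination k (monomials (x k)) v) = v := by
  have : orbit ∘ₗ Fintype.linearCombination k (monomials (x k)) = LinearMap.id := by
    ext j
    simp [orbit_monomials]
  exact LinearMap.congr_fun this v

def basisEquiv : (Fin 8 → k) ≃ₗ[k] A k :=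
  LinearEquiv.ofBijective (Fintype.linearCombination k (monomials (x k)))
    ⟨Function.LeftInverse.injective orbit_linearCombination_monomials,
      quadricRelations_x.linearCombination_monomials_surjective adjoin_range_x⟩

end QuadricExample

end

/-- In `k[X₁,X₂,X₃]`, the ideal `q' = (X₃² - X₁², X₂X₃, X₂² - X₁²)` is primary, its
radical is the maximal ideal `m = (X₁,X₂,X₃)`, and the quotient ring is a `k`-vector
space of dimension `8 = 2³`. -/
theorem primary_ideal_example_dimension_eight
    {k : Type*} [Field k] :
    (Ideal.span {(X 2 : MvPolynomial (Fin 3) k) ^ 2 - X 0 ^ 2, X 1 * X 2,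
        X 1 ^ 2 - X 0 ^ 2}).IsPrimary ∧
    (Ideal.span {(X 2 : MvPolynomial (Fin 3) k) ^ 2 - X 0 ^ 2, X 1 * X 2,
        X 1 ^ 2 - X 0 ^ 2}).radical =
      Ideal.span {(X 0 : MvPolynomial (Fin 3) k), X 1, X 2} ∧
    (Ideal.span {(X 0 : MvPolynomial (Fin 3) k), X 1, X 2}).IsMaximal ∧
    FiniteDimensional k (MvPolynomial (Fin 3) k ⧸
      Ideal.span {(X 2 : MvPolynomial (Fin 3) k) ^ 2 - X 0 ^ 2, X 1 * X 2,
        X 1 ^ 2 - X 0 ^ 2}) ∧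
    Module.finrank k (MvPolynomial (Fin 3) k ⧸
      Ideal.span {(X 2 : MvPolynomial (Fin 3) k) ^ 2 - X 0 ^ 2, X 1 * X 2,
        X 1 ^ 2 - X 0 ^ 2}) = 8 := by
  have hm : idealOfVars (Fin 3) k = Ideal.span {X 0, X 1, X 2} := by
    rw [idealOfVars]
    congr 1
    ext
    simp [Fin.exists_fin_succ, eq_comm]
  refine ⟨Ideal.isPrimary_of_isMaximal_radical ?_, ?_, ?_, ?_, ?_⟩
  · exact QuadricExample.radical_q (K := k) ▸ isMaximal_idealOfVars_s19 _ _
  · exact hm ▸ QuadricExample.radical_q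
  · exact hm ▸ isMaximal_idealOfVars_s19 _ _
  · exact (QuadricExample.basisEquiv (k := k)).finiteDimensional
  · exact (QuadricExample.basisEquiv (k := k)).finrank_eq.symm.trans (Module.finrank_fin_fun k)
end
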